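/- arXiv:2008.13291 — 2 statements merged into one kernel-verified Lean document; each statement's English description precedes it below -/
import Mathlib

section
/- Let f : ℝⁿ → ℝ be ω-strongly convex with gradient ∇f, L a graph Laplacian of a connected undirected graph with second eigenvalue λ₂ > 0, and p⋆ the minimizer of f subject to 𝟙ᵀp = c. If 𝟙ᵀp = c and p⁺ = p − ηL∇f(p), then λ₂ω‖p − p⋆‖ ≤ ‖L∇f(p)‖ = (1/η)‖p⁺ − p‖. Consequently, if each coordinate satisfies |pᵢ⁺ − pᵢ| ≤ Δηλ₂ω/√n, then ‖p − p⋆‖ ≤ Δ. -/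
open scoped RealInnerProductSpace

/-- The all-ones vector in `ℝⁿ`. -/
noncomputable def onesVec (n : ℕ) : EuclideanSpace ℝ (Fin n) := WithLp.toLp 2 (fun _ => 1)

/-!
At the constrained minimiser `p⋆` the gradient is orthogonal to `𝟙ᗮ`, hence a multiple of `𝟙`,
which `L` kills; so `L ∇f(p) = L g` with `g = ∇f(p) - ∇f(p⋆)`. Replacing `g` by its projection
`Pg` onto `𝟙ᗮ` changes neither `L g` nor `⟪g, p - p⋆⟫` (as `p - p⋆ ⊥ 𝟙`), so strong monotonicity,
Cauchy–Schwarz and the spectral gap give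
`λ₂ ω ‖p - p⋆‖² ≤ λ₂ ⟪Pg, p - p⋆⟫ ≤ λ₂ ‖Pg‖ ‖p - p⋆‖ ≤ ‖L ∇f(p)‖ ‖p - p⋆‖`.
The coordinatewise bound on `p⁺ - p` gives `‖p⁺ - p‖ ≤ Δηλ₂ω`, whence `‖p - p⋆‖ ≤ Δ`.
-/

theorem EuclideanSpace.norm_le_sqrt_card_mul {ι : Type*} [Fintype ι] {x : EuclideanSpace ℝ ι}
    {M : ℝ} (hM : 0 ≤ M) (hx : ∀ i, |x i| ≤ M) : ‖x‖ ≤ √(Fintype.card ι) * M :=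
  calc ‖x‖ = √(∑ i, ‖x i‖ ^ 2) := EuclideanSpace.norm_eq x
    _ ≤ √(∑ _i : ι, M ^ 2) := by gcongr with i; exact hx i
    _ = √(Fintype.card ι) * M := by
      rw [Finset.sum_const, Finset.card_univ, nsmul_eq_mul, Real.sqrt_mul (Nat.cast_nonneg _),
        Real.sqrt_sq hM]

theorem EuclideanSpace.norm_le_of_abs_le_div_sqrt_card {ι : Type*} [Fintype ι]
    {x : EuclideanSpace ℝ ι} {M : ℝ} (hM : 0 ≤ M) (hx : ∀ i, |x i| ≤ M / √(Fintype.card ι)) :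
    ‖x‖ ≤ M := by
  rcases isEmpty_or_nonempty ι with hι | hι
  · rw [Subsingleton.elim x 0, norm_zero]
    exact hM
  · have hcard : 0 < √(Fintype.card ι) := Real.sqrt_pos.2 (Nat.cast_pos.2 Fintype.card_pos)
    simpa only [mul_div_cancel₀ _ hcard.ne'] using
      norm_le_sqrt_card_mul (div_nonneg hM hcard.le) hx

section InnerProductSpace

variable {E F : Type*} [NormedAddCommGroup E] [InnerProductSpace ℝ E]

theorem inner_gradient_eq_zero_of_isMinOn_hyperplane [CompleteSpace E] {f : E → ℝ}
    {u x w : E} {c : ℝ} (hx : ⟪u, x⟫ = c) (hmin : IsMinOn f {q | ⟪u, q⟫ = c} x)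
    (hw : ⟪u, w⟫ = 0) : ⟪gradient f x, w⟫ = 0 := by
  rw [gradient, InnerProductSpace.toDual_symm_apply]
  by_cases hf : DifferentiableAt ℝ f x
  · rw [← hf.lineDeriv_eq_fderiv]
    exact hmin.lineDeriv_eq_zero <| .of_forall fun t => by
      simp [inner_add_right, inner_smul_right, hw, hx]
  · rw [fderiv_zero_of_not_differentiableAt hf]; rfl

theorem gradient_mem_span_of_isMinOn_hyperplane [CompleteSpace E] {f : E → ℝ}
    {u x : E} {c : ℝ} (hx : ⟪u, x⟫ = c) (hmin : IsMinOn f {q | ⟪u, q⟫ = c} x) :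
    gradient f x ∈ ℝ ∙ u := by
  rw [← (ℝ ∙ u).orthogonal_orthogonal]
  intro w hw
  rw [real_inner_comm]
  exact inner_gradient_eq_zero_of_isMinOn_hyperplane hx hmin
    (Submodule.mem_orthogonal_singleton_iff_inner_right.1 hw)

variable [NormedAddCommGroup F] [NormedSpace ℝ F]

theorem mul_inner_le_norm_map_mul_norm_of_spectral_gap {L : E →L[ℝ] F} {u : E} {lam : ℝ}
    (hlam : 0 ≤ lam) (hker : L u = 0) (hgap : ∀ w, ⟪w, u⟫ = 0 → lam * ‖w‖ ≤ ‖L w‖)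
    (g : E) {v : E} (hv : ⟪u, v⟫ = 0) : lam * ⟪g, v⟫ ≤ ‖L g‖ * ‖v‖ := by
  set K := (ℝ ∙ u)ᗮ
  have hvK : v ∈ K := Submodule.mem_orthogonal_singleton_iff_inner_right.2 hv
  have hLg : L (K.starProjection g) = L g := by
    obtain ⟨a, ha⟩ := Submodule.mem_span_singleton.1 <|
      (ℝ ∙ u).orthogonal_orthogonal ▸ K.sub_starProjection_mem_orthogonal g
    rw [eq_comm, ← sub_eq_zero, ← map_sub, ← ha, map_smul, hker, smul_zero]
  have hg : ⟪K.starProjection g, v⟫ = ⟪g, v⟫ := by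
    rw [K.inner_starProjection_left_eq_right, K.starProjection_eq_self_iff.2 hvK]
  have hgapK := hgap (K.starProjection g)
    (Submodule.mem_orthogonal_singleton_iff_inner_left.1 (K.starProjection_apply_mem g))
  calc lam * ⟪g, v⟫ = lam * ⟪K.starProjection g, v⟫ := by rw [hg]
    _ ≤ lam * (‖K.starProjection g‖ * ‖v‖) := by gcongr; exact real_inner_le_norm _ _
    _ ≤ ‖L g‖ * ‖v‖ := by rw [← mul_assoc, ← hLg]; gcongr

theorem mul_mul_norm_le_norm_map_of_spectral_gap {L : E →L[ℝ] F} {u : E} {lam ω : ℝ}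
    (hlam : 0 ≤ lam) (hker : L u = 0) (hgap : ∀ w, ⟪w, u⟫ = 0 → lam * ‖w‖ ≤ ‖L w‖)
    {g v : E} (hv : ⟪u, v⟫ = 0) (hgv : ω * ‖v‖ ^ 2 ≤ ⟪g, v⟫) : lam * ω * ‖v‖ ≤ ‖L g‖ := by
  rcases (norm_nonneg v).eq_or_lt with hv0 | hvpos
  · rw [← hv0, mul_zero]
    exact norm_nonneg _
  refine le_of_mul_le_mul_right ?_ hvpos
  calc lam * ω * ‖v‖ * ‖v‖ = lam * (ω * ‖v‖ ^ 2) := by ring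
    _ ≤ lam * ⟪g, v⟫ := by gcongr
    _ ≤ ‖L g‖ * ‖v‖ := mul_inner_le_norm_map_mul_norm_of_spectral_gap hlam hker hgap g hv

end InnerProductSpace

theorem stopping_criterion_general {n : ℕ} (f : EuclideanSpace ℝ (Fin n) → ℝ)
    (L : EuclideanSpace ℝ (Fin n) →L[ℝ] EuclideanSpace ℝ (Fin n))
    (ω lam2 η c Δ : ℝ) (hω : 0 < ω) (hlam2 : 0 < lam2) (hη : 0 < η) (hΔ : 0 < Δ)
    (hstrong : ∀ p q, ω * ‖p - q‖^2 ≤ ⟪gradient f p - gradient f q, p - q⟫)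
    (hker : L (onesVec n) = 0)
    (hgap : ∀ v : EuclideanSpace ℝ (Fin n),
      ⟪v, onesVec n⟫ = 0 → lam2 * ‖v‖ ≤ ‖L v‖)
    (pstar : EuclideanSpace ℝ (Fin n))
    (hstar_feas : ⟪onesVec n, pstar⟫ = c)
    (hstar_min : ∀ q, ⟪onesVec n, q⟫ = c → f pstar ≤ f q)
    (p : EuclideanSpace ℝ (Fin n))
    (hp_feas : ⟪onesVec n, p⟫ = c) :
    lam2 * ω * ‖p - pstar‖ ≤ ‖L (gradient f p)‖ ∧
    ‖L (gradient f p)‖ = (1/η) * ‖(p - η • L (gradient f p)) - p‖ ∧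
    ((∀ i : Fin n, |(p - η • L (gradient f p)) i - p i| ≤ Δ * η * lam2 * ω / Real.sqrt n) →
      ‖p - pstar‖ ≤ Δ) := by
  have hLstar : L (gradient f pstar) = 0 := by
    obtain ⟨a, ha⟩ := Submodule.mem_span_singleton.1
      (gradient_mem_span_of_isMinOn_hyperplane hstar_feas hstar_min)
    rw [← ha, map_smul, hker, smul_zero]
  have hfeas : ⟪onesVec n, p - pstar⟫ = 0 := by
    rw [inner_sub_right, hp_feas, hstar_feas, sub_self]
  have hbound : lam2 * ω * ‖p - pstar‖ ≤ ‖L (gradient f p)‖ := by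
    simpa only [map_sub, hLstar, sub_zero] using
      mul_mul_norm_le_norm_map_of_spectral_gap hlam2.le hker hgap hfeas (hstrong p pstar)
  have hstep : ‖(p - η • L (gradient f p)) - p‖ = η * ‖L (gradient f p)‖ := by
    rw [sub_sub_cancel_left, norm_neg, norm_smul, Real.norm_of_nonneg hη.le]
  refine ⟨hbound, by rw [hstep, one_div, inv_mul_cancel_left₀ hη.ne'], fun hcoord => ?_⟩
  have hstep_le : η * ‖L (gradient f p)‖ ≤ η * (Δ * lam2 * ω) := by
    rw [← hstep]
    calc _ ≤ Δ * η * lam2 * ω :=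
          EuclideanSpace.norm_le_of_abs_le_div_sqrt_card (by positivity)
            fun i => by rw [Fintype.card_fin]; exact hcoord i
      _ = η * (Δ * lam2 * ω) := by ring
  have hLg := le_of_mul_le_mul_left hstep_le hη
  exact le_of_mul_le_mul_left (by linarith) (mul_pos hlam2 hω)

/-- Locally checkable stopping criterion: `λ₂ω‖p - p⋆‖ ≤ ‖L∇f(p)‖ = (1/η)‖p⁺ - p‖`, and
if each coordinate update is at most `Δηλ₂ω/√n` then `‖p - p⋆‖ ≤ Δ`. -/
theorem stopping_criterion {n : ℕ} (f : EuclideanSpace ℝ (Fin n) → ℝ)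
    (L : EuclideanSpace ℝ (Fin n) →L[ℝ] EuclideanSpace ℝ (Fin n))
    (ω lam2 η c Δ : ℝ) (hω : 0 < ω) (hlam2 : 0 < lam2) (hη : 0 < η) (hΔ : 0 < Δ)
    (hstrong : ∀ p q, ω * ‖p - q‖^2 ≤ ⟪gradient f p - gradient f q, p - q⟫)
    (hsym : ∀ x y, ⟪L x, y⟫ = ⟪x, L y⟫)
    (hker : L (onesVec n) = 0)
    (hgap : ∀ v : EuclideanSpace ℝ (Fin n),
      ⟪v, onesVec n⟫ = 0 → lam2 * ‖v‖ ≤ ‖L v‖)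
    (pstar : EuclideanSpace ℝ (Fin n))
    (hstar_feas : ⟪onesVec n, pstar⟫ = c)
    (hstar_min : ∀ q, ⟪onesVec n, q⟫ = c → f pstar ≤ f q)
    (p : EuclideanSpace ℝ (Fin n))
    (hp_feas : ⟪onesVec n, p⟫ = c) :
    lam2 * ω * ‖p - pstar‖ ≤ ‖L (gradient f p)‖ ∧
    ‖L (gradient f p)‖ = (1/η) * ‖(p - η • L (gradient f p)) - p‖ ∧
    ((∀ i : Fin n, |(p - η • L (gradient f p)) i - p i| ≤ Δ * η * lam2 * ω / Real.sqrt n) →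
      ‖p - pstar‖ ≤ Δ) :=
  stopping_criterion_general f L ω lam2 η c Δ hω hlam2 hη hΔ hstrong hker hgap pstar hstar_feas
    hstar_min p hp_feas
end

section
/- Suppose the subsolver output x¹ satisfies m(x¹) − m(x⁰) < −cε‖x¹ − x⁰‖ − c√(ρε)‖x¹ − x⁰‖², and the gradient/Hessian estimates satisfy ‖g − ∇F̄(x⁰)‖ ≤ c̄ε + ψ_g Δ and ‖(H − ∇²F̄(x⁰))v‖ ≤ (c̄√(ρε) + ψ_H Δ)‖v‖, with c̄ε + ψ_g Δ ≤ cε and c̄√(ρε) + ψ_H Δ ≤ c√(ρε). Then F̄(x¹) < F̄(x⁰) whenever x¹ ≠ x⁰, using the descent bound F̄(x¹) − F̄(x⁰) ≤ m(x¹) − m(x⁰) + ‖g − ∇F̄(x⁰)‖·‖x¹−x⁰‖ + (1/2)‖(H − ∇²F̄(x⁰))‖·‖x¹−x⁰‖² (a factor-of-2 slack is absorbed into the constants). -/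
/-!
With `s = x¹ - x⁰` and `φ t = F̄ (x⁰ + t • s)`, the Lipschitz Hessian gives
`φ'' t ≤ φ'' 0 + ρ ‖s‖³ t` for `t ≥ 0`; comparing derivatives twice yields the cubic upper bound
`F̄ x¹ ≤ F̄ x⁰ + ⟪s, ∇F̄ x⁰⟫ + ½ ⟪s, ∇²F̄ x⁰ s⟫ + ρ/6 ‖s‖³`. Replacing `∇F̄ x⁰, ∇²F̄ x⁰` by the
estimates `g, H` costs at most `cε ‖s‖ + ½ c√(ρε) ‖s‖²`, which the required model decrease
more than pays for.
-/

open Set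
open scoped RealInnerProductSpace

theorem hasDerivAt_cubic (a b c d t : ℝ) :
    HasDerivAt (fun t => a + b * t + c * t ^ 2 + d * t ^ 3) (b + 2 * c * t + 3 * d * t ^ 2) t := by
  refine ((((hasDerivAt_id' t).const_mul b).const_add a).fun_add
    ((hasDerivAt_pow 2 t).const_mul c)).fun_add ((hasDerivAt_pow 3 t).const_mul d)
    |>.congr_deriv ?_
  push_cast
  ring

theorem le_of_hasDerivAt_le_of_le {f f' B B' : ℝ → ℝ} {a b : ℝ} (hab : a ≤ b)
    (hf : ∀ x, HasDerivAt f (f' x) x) (hB : ∀ x, HasDerivAt B (B' x) x) (ha : f a ≤ B a)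
    (bound : ∀ x ∈ Ico a b, f' x ≤ B' x) : f b ≤ B b :=
  image_le_of_deriv_right_le_deriv_boundary (fun x _ => (hf x).continuousAt.continuousWithinAt)
    (fun x _ => (hf x).hasDerivWithinAt) ha (fun x _ => (hB x).continuousAt.continuousWithinAt)
    (fun x _ => (hB x).hasDerivWithinAt) bound ⟨hab, le_rfl⟩

theorem le_taylor_two_add_cubic_of_hasDerivAt {φ u w : ℝ → ℝ} {K t : ℝ} (ht : 0 ≤ t)
    (hφ : ∀ s, HasDerivAt φ (u s) s) (hu : ∀ s, HasDerivAt u (w s) s)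
    (hw : ∀ s ∈ Ico 0 t, w s ≤ w 0 + K * s) :
    φ t ≤ φ 0 + u 0 * t + w 0 / 2 * t ^ 2 + K / 6 * t ^ 3 := by
  have hu_le : ∀ s ∈ Ico 0 t, u s ≤ u 0 + w 0 * s + K / 2 * s ^ 2 + 0 * s ^ 3 := fun s hs =>
    le_of_hasDerivAt_le_of_le hs.1 hu (hasDerivAt_cubic _ _ _ _) (by simp)
      fun r hr => by linarith [hw r ⟨hr.1, hr.2.trans hs.2⟩]
  exact le_of_hasDerivAt_le_of_le ht hφ (hasDerivAt_cubic _ _ _ _) (by simp)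
    fun s hs => by linarith [hu_le s hs]

variable {E : Type*} [NormedAddCommGroup E] [InnerProductSpace ℝ E]

theorem real_inner_apply_self_le {T : E →L[ℝ] E} {s : E} {b : ℝ} (h : ‖T s‖ ≤ b * ‖s‖) :
    ⟪s, T s⟫ ≤ b * ‖s‖ ^ 2 :=
  calc ⟪s, T s⟫ ≤ ‖s‖ * ‖T s‖ := real_inner_le_norm _ _
    _ ≤ ‖s‖ * (b * ‖s‖) := by gcongr
    _ = b * ‖s‖ ^ 2 := by ring

variable [CompleteSpace E]

theorem le_taylor_two_add_cubic {F : E → ℝ} {ρ : ℝ} (hF : ContDiff ℝ 2 F)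
    (hLip : ∀ x y, ‖fderiv ℝ (gradient F) x - fderiv ℝ (gradient F) y‖ ≤ ρ * ‖x - y‖) (x y : E) :
    F y ≤ F x + ⟪y - x, gradient F x⟫ + (1 / 2) * ⟪y - x, fderiv ℝ (gradient F) x (y - x)⟫
      + (ρ / 6) * ‖y - x‖ ^ 3 := by
  set s := y - x
  set A := fderiv ℝ (gradient F)
  have hγ (t : ℝ) : HasDerivAt (fun t : ℝ => x + t • s) s t := by
    simpa using ((hasDerivAt_id t).smul_const s).const_add x
  have hG : ContDiff ℝ 1 (gradient F) :=
    (InnerProductSpace.toDual ℝ E).symm.contDiff.comp (hF.fderiv_right (by norm_num))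
  have hφ (t : ℝ) : HasDerivAt (fun t => F (x + t • s)) ⟪s, gradient F (x + t • s)⟫ t := by
    rw [real_inner_comm, inner_gradient_left]
    exact ((hF.differentiable (by norm_num)) _).hasFDerivAt.comp_hasDerivAt t (hγ t)
  have hu (t : ℝ) : HasDerivAt (fun t => ⟪s, gradient F (x + t • s)⟫) ⟪s, A (x + t • s) s⟫ t :=
    (innerSL ℝ s).hasFDerivAt.comp_hasDerivAt t
      (((hG.differentiable one_ne_zero) _).hasFDerivAt.comp_hasDerivAt t (hγ t))
  have hw : ∀ t ∈ Ico (0 : ℝ) 1,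
      ⟪s, A (x + t • s) s⟫ ≤ ⟪s, A (x + (0 : ℝ) • s) s⟫ + ρ * ‖s‖ ^ 3 * t := by
    intro t ht
    have hT : ‖(A (x + t • s) - A x) s‖ ≤ ρ * ‖s‖ * t * ‖s‖ := by
      calc ‖(A (x + t • s) - A x) s‖ ≤ ‖A (x + t • s) - A x‖ * ‖s‖ := (A _ - A x).le_opNorm s
        _ ≤ ρ * ‖x + t • s - x‖ * ‖s‖ := by gcongr; exact hLip _ _
        _ = ρ * ‖s‖ * t * ‖s‖ := by
          rw [add_sub_cancel_left, norm_smul, Real.norm_of_nonneg ht.1]; ring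
    have hquad := real_inner_apply_self_le hT
    simp only [sub_apply, inner_sub_right] at hquad
    simp only [zero_smul, add_zero]
    linarith
  have hφ1 := le_taylor_two_add_cubic_of_hasDerivAt zero_le_one hφ hu hw
  simp only [zero_smul, add_zero, one_smul, add_sub_cancel, s] at hφ1
  linarith

theorem le_inexact_model_add_error {F : E → ℝ} {ρ : ℝ} (hF : ContDiff ℝ 2 F)
    (hLip : ∀ x y, ‖fderiv ℝ (gradient F) x - fderiv ℝ (gradient F) y‖ ≤ ρ * ‖x - y‖)
    (x y g : E) (H : E →L[ℝ] E) {δg δH : ℝ} (hg : ‖g - gradient F x‖ ≤ δg)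
    (hH : ∀ v, ‖H v - fderiv ℝ (gradient F) x v‖ ≤ δH * ‖v‖) :
    F y ≤ F x + ⟪y - x, g⟫ + (1 / 2) * ⟪y - x, H (y - x)⟫ + (ρ / 6) * ‖y - x‖ ^ 3
      + δg * ‖y - x‖ + (1 / 2) * δH * ‖y - x‖ ^ 2 := by
  have hgrad : ⟪y - x, gradient F x - g⟫ ≤ δg * ‖y - x‖ := by
    calc ⟪y - x, gradient F x - g⟫ ≤ ‖y - x‖ * ‖gradient F x - g‖ := real_inner_le_norm _ _
      _ ≤ ‖y - x‖ * δg := by rw [norm_sub_rev (gradient F x)]; gcongr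
      _ = δg * ‖y - x‖ := mul_comm _ _
  have hhess : ⟪y - x, (fderiv ℝ (gradient F) x - H) (y - x)⟫ ≤ δH * ‖y - x‖ ^ 2 :=
    real_inner_apply_self_le (by rw [sub_apply, norm_sub_rev]; exact hH _)
  rw [inner_sub_right] at hgrad
  rw [sub_apply, inner_sub_right] at hhess
  linarith [le_taylor_two_add_cubic hF hLip x y]

theorem discrn_strict_decrease_general {d : ℕ} (F : EuclideanSpace ℝ (Fin d) → ℝ) (ρ : ℝ)
    (hF : ContDiff ℝ 2 F)
    (hLip : ∀ x y, ‖fderiv ℝ (gradient F) x - fderiv ℝ (gradient F) y‖ ≤ ρ * ‖x - y‖)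
    (x0 x1 : EuclideanSpace ℝ (Fin d)) (g : EuclideanSpace ℝ (Fin d))
    (H : EuclideanSpace ℝ (Fin d) →L[ℝ] EuclideanSpace ℝ (Fin d))
    (c cbar ε ψg ψH Δ : ℝ)
    (hc : 0 < c)
    (m : EuclideanSpace ℝ (Fin d) → ℝ)
    (hm : ∀ x, m x = F x0 + ⟪x - x0, g⟫ + (1/2) * ⟪x - x0, H (x - x0)⟫
      + (ρ/6) * ‖x - x0‖^3)
    (hmodel : m x1 - m x0 < -(c * ε) * ‖x1 - x0‖ - (c * Real.sqrt (ρ * ε)) * ‖x1 - x0‖^2)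
    (hg : ‖g - gradient F x0‖ ≤ cbar * ε + ψg * Δ)
    (hH : ∀ v, ‖H v - (fderiv ℝ (gradient F) x0) v‖ ≤ (cbar * Real.sqrt (ρ * ε) + ψH * Δ) * ‖v‖)
    (hacc_g : cbar * ε + ψg * Δ ≤ c * ε)
    (hacc_H : cbar * Real.sqrt (ρ * ε) + ψH * Δ ≤ c * Real.sqrt (ρ * ε)) :
    F x1 < F x0 := by
  have hdescent := le_inexact_model_add_error hF hLip x0 x1 g H (δH := c * Real.sqrt (ρ * ε))
    (hg.trans hacc_g) fun v => (hH v).trans (by gcongr)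
  have hm0 : m x0 = F x0 := by simp [hm x0]
  have hcubic : 0 ≤ c * Real.sqrt (ρ * ε) * ‖x1 - x0‖ ^ 2 := by positivity
  rw [hm x1, hm0] at hmodel
  linarith

/-- Strict decrease of the true objective under sufficient model decrease and sufficiently
accurate gradient/Hessian estimates. -/
theorem discrn_strict_decrease {d : ℕ} (F : EuclideanSpace ℝ (Fin d) → ℝ) (ρ : ℝ)
    (hρ : 0 < ρ) (hF : ContDiff ℝ 2 F)
    (hLip : ∀ x y, ‖fderiv ℝ (gradient F) x - fderiv ℝ (gradient F) y‖ ≤ ρ * ‖x - y‖)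
    (x0 x1 : EuclideanSpace ℝ (Fin d)) (g : EuclideanSpace ℝ (Fin d))
    (H : EuclideanSpace ℝ (Fin d) →L[ℝ] EuclideanSpace ℝ (Fin d))
    (hHsym : ∀ x y, ⟪H x, y⟫ = ⟪x, H y⟫)
    (c cbar ε ψg ψH Δ : ℝ)
    (hc : 0 < c) (hcbar : 0 < cbar) (hε : 0 < ε) (hψg : 0 < ψg) (hψH : 0 < ψH) (hΔ : 0 < Δ)
    (m : EuclideanSpace ℝ (Fin d) → ℝ)
    (hm : ∀ x, m x = F x0 + ⟪x - x0, g⟫ + (1/2) * ⟪x - x0, H (x - x0)⟫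
      + (ρ/6) * ‖x - x0‖^3)
    (hmodel : m x1 - m x0 < -(c * ε) * ‖x1 - x0‖ - (c * Real.sqrt (ρ * ε)) * ‖x1 - x0‖^2)
    (hg : ‖g - gradient F x0‖ ≤ cbar * ε + ψg * Δ)
    (hH : ∀ v, ‖H v - (fderiv ℝ (gradient F) x0) v‖ ≤ (cbar * Real.sqrt (ρ * ε) + ψH * Δ) * ‖v‖)
    (hacc_g : cbar * ε + ψg * Δ ≤ c * ε)
    (hacc_H : cbar * Real.sqrt (ρ * ε) + ψH * Δ ≤ c * Real.sqrt (ρ * ε))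
    (hne : x1 ≠ x0) :
    F x1 < F x0 :=
  discrn_strict_decrease_general F ρ hF hLip x0 x1 g H c cbar ε ψg ψH Δ hc m hm hmodel hg hH hacc_g
    hacc_H
end
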